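/- Let A, B be bounded linear operators on a complex Hilbert space H such that w(AB + BA) = 2√2 · ‖B‖ · w(A) (or w(AB − BA) = 2√2 · ‖B‖ · w(A)) with B ≠ 0 and A ≠ 0. Then ‖Re(A) + Im(A)‖ = ‖Re(A) − Im(A)‖. -/

import Mathlib

/-!
Put `P = ℜA + ℑA` and `Q = ℜA - ℑA`. The real parts of `⟪Px, x⟫` and `⟪Qx, x⟫` are
`re z ∓ im z` with `z = ⟪Ax, x⟫`, so `‖P‖, ‖Q‖ ≤ √2 w(A)`. On the other hand
`‖Ax‖² + ‖A*x‖² = ‖Px‖² + ‖Qx‖²` (parallelogram law twice), so for a unit vector `x`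
`|⟪(AB ± BA)x, x⟫| ≤ ‖B‖ (‖A*x‖ + ‖Ax‖) ≤ ‖B‖ √(2 (‖P‖² + ‖Q‖²))`.
The hypothesis therefore forces `‖P‖² + ‖Q‖² ≥ 4 w(A)²`, and together with the upper bounds
this gives `‖P‖ = ‖Q‖ = √2 w(A)`.
-/

open ContinuousLinearMap Complex

variable {H : Type*} [NormedAddCommGroup H] [InnerProductSpace ℂ H] [CompleteSpace H]

noncomputable def nrad (A : H →L[ℂ] H) : ℝ :=
  ⨆ x : {x : H // ‖x‖ = 1}, ‖(inner ℂ (A x) (x : H) : ℂ)‖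

noncomputable def reP (A : H →L[ℂ] H) : H →L[ℂ] H := (2 : ℂ)⁻¹ • (A + adjoint A)
noncomputable def imP (A : H →L[ℂ] H) : H →L[ℂ] H := (2 * Complex.I)⁻¹ • (A - adjoint A)

noncomputable def oabs (A : H →L[ℂ] H) : H →L[ℂ] H := cfc Real.sqrt (adjoint A * A)

noncomputable def opow (T : H →L[ℂ] H) (r : ℝ) : H →L[ℂ] H := cfc (fun t : ℝ => t ^ r) T

open scoped InnerProductSpace ComplexStarModule

theorem abs_re_sub_mul_im_le (z : ℂ) (t : ℝ) : |z.re - t * z.im| ≤ √(1 + t ^ 2) * ‖z‖ := by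
  refine abs_le_of_sq_le_sq ?_ (by positivity)
  rw [mul_pow, Real.sq_sqrt (by positivity), Complex.sq_norm, Complex.normSq_apply]
  nlinarith [sq_nonneg (t * z.re + z.im)]

theorem eq_of_two_mul_sq_le_sq_add_sq {p q c : ℝ} (hp : 0 ≤ p) (hq : 0 ≤ q) (hpc : p ≤ c)
    (hqc : q ≤ c) (h : 2 * c ^ 2 ≤ p ^ 2 + q ^ 2) : p = q := by
  nlinarith

theorem star_eq_realPart_sub_I_smul_imaginaryPart {A : Type*} [AddCommGroup A] [Module ℂ A]
    [StarAddMonoid A] [StarModule ℂ A] (a : A) : star a = ℜ a - I • (ℑ a : A) := by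
  conv_lhs => rw [← realPart_add_I_smul_imaginaryPart a]
  simp [star_smul, (ℜ a).prop.star_eq, (ℑ a).prop.star_eq, sub_eq_add_neg]

theorem ContinuousLinearMap.norm_le_of_abs_re_inner_self_le {𝕜 F : Type*} [RCLike 𝕜]
    [NormedAddCommGroup F] [InnerProductSpace 𝕜 F] {T : F →L[𝕜] F}
    (hT : (T : F →ₗ[𝕜] F).IsSymmetric) {C : ℝ} (hC : 0 ≤ C)
    (h : ∀ x, |RCLike.re ⟪T x, x⟫_𝕜| ≤ C * ‖x‖ ^ 2) : ‖T‖ ≤ C := by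
  rw [T.norm_eq_iSup_rayleighQuotient hT]
  refine ciSup_le fun x => ?_
  rcases eq_or_ne x 0 with rfl | hx
  · simpa using hC
  rw [rayleighQuotient, reApplyInnerSelf_apply, abs_div, abs_sq, div_le_iff₀ (by positivity)]
  exact h x

section

variable {E : Type*} [NormedAddCommGroup E] [InnerProductSpace ℂ E]

theorem norm_sq_add_I_smul_add_norm_sq_sub_I_smul (u v : E) :
    ‖u + I • v‖ ^ 2 + ‖u - I • v‖ ^ 2 = ‖u + v‖ ^ 2 + ‖u - v‖ ^ 2 := by
  have hIv : ‖I • v‖ = ‖v‖ := by rw [norm_smul, norm_I, one_mul]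
  have h₁ := parallelogram_law_with_norm ℂ u (I • v)
  have h₂ := parallelogram_law_with_norm ℂ u v
  rw [hIv] at h₁
  simp only [sq]
  linarith

theorem nrad_nonneg (A : E →L[ℂ] E) : 0 ≤ nrad A :=
  Real.iSup_nonneg fun _ => norm_nonneg _

theorem nrad_le {A : E →L[ℂ] E} {c : ℝ} (hc : 0 ≤ c)
    (h : ∀ x : E, ‖x‖ = 1 → ‖⟪A x, x⟫_ℂ‖ ≤ c) : nrad A ≤ c :=
  Real.iSup_le (fun x => h x x.2) hc

theorem norm_inner_apply_self_le_nrad_mul (A : E →L[ℂ] E) (x : E) :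
    ‖⟪A x, x⟫_ℂ‖ ≤ nrad A * ‖x‖ ^ 2 := by
  rcases eq_or_ne x 0 with rfl | hx
  · simp
  have hbdd : BddAbove (Set.range fun y : {y : E // ‖y‖ = 1} => ‖⟪A y, (y : E)⟫_ℂ‖) := by
    refine ⟨‖A‖, Set.forall_mem_range.2 fun y => ?_⟩
    calc ‖⟪A y, (y : E)⟫_ℂ‖ ≤ ‖A y‖ * ‖(y : E)‖ := norm_inner_le_norm _ _
      _ ≤ ‖A‖ * ‖(y : E)‖ * ‖(y : E)‖ := by gcongr; exact A.le_opNorm y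
      _ = ‖A‖ := by rw [y.2, mul_one, mul_one]
  set y : E := (‖x‖ : ℂ)⁻¹ • x
  have hy : ‖⟪A y, y⟫_ℂ‖ ≤ nrad A := le_ciSup hbdd ⟨y, norm_smul_inv_norm hx⟩
  have hxy : ‖⟪A x, x⟫_ℂ‖ = ‖⟪A y, y⟫_ℂ‖ * ‖x‖ ^ 2 := by
    simp [y, field]
  rw [hxy]
  gcongr

variable [CompleteSpace E]

theorem reP_eq_realPart (A : E →L[ℂ] E) : reP A = ℜ A := by
  rw [reP, realPart_apply_coe, star_eq_adjoint, ← Complex.coe_smul]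
  norm_num

theorem imP_eq_imaginaryPart (A : E →L[ℂ] E) : imP A = ℑ A := by
  rw [imP, imaginaryPart_apply_coe, star_eq_adjoint, ← Complex.coe_smul, smul_smul]
  norm_num [field]

theorem re_inner_realPart_apply_self (A : E →L[ℂ] E) (x : E) :
    (⟪(ℜ A : E →L[ℂ] E) x, x⟫_ℂ).re = (⟪A x, x⟫_ℂ).re := by
  rw [realPart_apply_coe, ← Complex.coe_smul, smul_apply, add_apply, inner_smul_left,
    inner_add_left, star_eq_adjoint, adjoint_inner_left, ← inner_conj_symm x (A x)]
  simp [-inner_conj_symm]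
  ring

theorem re_inner_imaginaryPart_apply_self (A : E →L[ℂ] E) (x : E) :
    (⟪(ℑ A : E →L[ℂ] E) x, x⟫_ℂ).re = -(⟪A x, x⟫_ℂ).im := by
  rw [imaginaryPart_apply_coe, ← Complex.coe_smul, smul_smul, smul_apply, sub_apply,
    inner_smul_left, inner_sub_left, star_eq_adjoint, adjoint_inner_left,
    ← inner_conj_symm x (A x)]
  simp [-inner_conj_symm]
  ring

theorem norm_realPart_add_smul_imaginaryPart_le (A : E →L[ℂ] E) (t : ℝ) :
    ‖(ℜ A : E →L[ℂ] E) + t • (ℑ A : E →L[ℂ] E)‖ ≤ √(1 + t ^ 2) * nrad A := by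
  have hsa : IsSelfAdjoint ((ℜ A : E →L[ℂ] E) + t • (ℑ A : E →L[ℂ] E)) :=
    (ℜ A).prop.add ((IsSelfAdjoint.all t).smul (ℑ A).prop)
  refine norm_le_of_abs_re_inner_self_le hsa.isSymmetric (by positivity [nrad_nonneg A])
    fun x => ?_
  have hre : RCLike.re ⟪((ℜ A : E →L[ℂ] E) + t • (ℑ A : E →L[ℂ] E)) x, x⟫_ℂ
      = (⟪A x, x⟫_ℂ).re - t * (⟪A x, x⟫_ℂ).im := by
    simp [re_inner_realPart_apply_self, re_inner_imaginaryPart_apply_self, sub_eq_add_neg]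
  rw [hre, mul_assoc]
  exact (abs_re_sub_mul_im_le _ t).trans
    (by gcongr; exact norm_inner_apply_self_le_nrad_mul A x)

theorem norm_sq_apply_add_norm_sq_adjoint_apply (A : E →L[ℂ] E) (x : E) :
    ‖A x‖ ^ 2 + ‖adjoint A x‖ ^ 2 =
      ‖((ℜ A : E →L[ℂ] E) + ℑ A) x‖ ^ 2 + ‖((ℜ A : E →L[ℂ] E) - ℑ A) x‖ ^ 2 := by
  have hA : A x = (ℜ A : E →L[ℂ] E) x + I • (ℑ A : E →L[ℂ] E) x := by
    conv_lhs => rw [← realPart_add_I_smul_imaginaryPart A]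
    rfl
  have hA' : adjoint A x = (ℜ A : E →L[ℂ] E) x - I • (ℑ A : E →L[ℂ] E) x := by
    rw [← star_eq_adjoint, star_eq_realPart_sub_I_smul_imaginaryPart]
    rfl
  rw [hA, hA', add_apply, sub_apply, norm_sq_add_I_smul_add_norm_sq_sub_I_smul]

theorem norm_apply_add_norm_adjoint_apply_le (A : E →L[ℂ] E) (x : E) :
    ‖A x‖ + ‖adjoint A x‖ ≤
      √(2 * (‖(ℜ A : E →L[ℂ] E) + ℑ A‖ ^ 2 + ‖(ℜ A : E →L[ℂ] E) - ℑ A‖ ^ 2)) * ‖x‖ := by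
  refine le_of_pow_le_pow_left₀ two_ne_zero (by positivity) ?_
  rw [mul_pow, Real.sq_sqrt (by positivity)]
  have hP := ((ℜ A : E →L[ℂ] E) + ℑ A).le_opNorm x
  have hQ := ((ℜ A : E →L[ℂ] E) - ℑ A).le_opNorm x
  have hsum := norm_sq_apply_add_norm_sq_adjoint_apply A x
  nlinarith [sq_nonneg (‖A x‖ - ‖adjoint A x‖), norm_nonneg (((ℜ A : E →L[ℂ] E) + ℑ A) x),
    norm_nonneg (((ℜ A : E →L[ℂ] E) - ℑ A) x)]

theorem norm_inner_mul_apply_self_add_le (A B : E →L[ℂ] E) (x : E) :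
    ‖⟪(A * B) x, x⟫_ℂ‖ + ‖⟪(B * A) x, x⟫_ℂ‖ ≤
      ‖B‖ * √(2 * (‖(ℜ A : E →L[ℂ] E) + ℑ A‖ ^ 2 + ‖(ℜ A : E →L[ℂ] E) - ℑ A‖ ^ 2)) * ‖x‖ ^ 2 := by
  calc ‖⟪(A * B) x, x⟫_ℂ‖ + ‖⟪(B * A) x, x⟫_ℂ‖
      = ‖⟪B x, adjoint A x⟫_ℂ‖ + ‖⟪B (A x), x⟫_ℂ‖ := by
        simp only [mul_apply_eq_comp, adjoint_inner_right]
    _ ≤ ‖B‖ * ‖x‖ * ‖adjoint A x‖ + ‖B‖ * ‖A x‖ * ‖x‖ := by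
      gcongr
      · exact (norm_inner_le_norm _ _).trans (by gcongr; exact B.le_opNorm x)
      · exact (norm_inner_le_norm _ _).trans (by gcongr; exact B.le_opNorm _)
    _ = ‖B‖ * (‖A x‖ + ‖adjoint A x‖) * ‖x‖ := by ring
    _ ≤ ‖B‖ * (√(2 * (‖(ℜ A : E →L[ℂ] E) + ℑ A‖ ^ 2 + ‖(ℜ A : E →L[ℂ] E) - ℑ A‖ ^ 2)) * ‖x‖)
          * ‖x‖ := by
      gcongr
      exact norm_apply_add_norm_adjoint_apply_le A x
    _ = _ := by ring

theorem nrad_mul_add_mul_le (A B : E →L[ℂ] E) :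
    nrad (A * B + B * A) ≤
      ‖B‖ * √(2 * (‖(ℜ A : E →L[ℂ] E) + ℑ A‖ ^ 2 + ‖(ℜ A : E →L[ℂ] E) - ℑ A‖ ^ 2)) :=
  nrad_le (by positivity) fun x hx => by
    rw [add_apply, inner_add_left]
    simpa [hx] using (norm_add_le _ _).trans (norm_inner_mul_apply_self_add_le A B x)

theorem nrad_mul_sub_mul_le (A B : E →L[ℂ] E) :
    nrad (A * B - B * A) ≤
      ‖B‖ * √(2 * (‖(ℜ A : E →L[ℂ] E) + ℑ A‖ ^ 2 + ‖(ℜ A : E →L[ℂ] E) - ℑ A‖ ^ 2)) :=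
  nrad_le (by positivity) fun x hx => by
    rw [sub_apply, inner_sub_left]
    simpa [hx] using (norm_sub_le _ _).trans (norm_inner_mul_apply_self_add_le A B x)

end

theorem stmt17_general (A B : H →L[ℂ] H) (hB : B ≠ 0)
    (h : nrad (A * B + B * A) = 2 * Real.sqrt 2 * ‖B‖ * nrad A
      ∨ nrad (A * B - B * A) = 2 * Real.sqrt 2 * ‖B‖ * nrad A) :
    ‖reP A + imP A‖ = ‖reP A - imP A‖ := by
  rw [reP_eq_realPart, imP_eq_imaginaryPart]
  have hp := norm_realPart_add_smul_imaginaryPart_le A 1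
  have hq := norm_realPart_add_smul_imaginaryPart_le A (-1)
  norm_num [← sub_eq_add_neg] at hp hq
  set p := ‖(ℜ A : H →L[ℂ] H) + ℑ A‖
  set q := ‖(ℜ A : H →L[ℂ] H) - ℑ A‖
  have hS : 2 * √2 * ‖B‖ * nrad A ≤ ‖B‖ * √(2 * (p ^ 2 + q ^ 2)) := by
    rcases h with h | h
    · exact h ▸ nrad_mul_add_mul_le A B
    · exact h ▸ nrad_mul_sub_mul_le A B
  have hw : 2 * √2 * nrad A ≤ √(2 * (p ^ 2 + q ^ 2)) :=
    le_of_mul_le_mul_left (by linarith) (norm_pos_iff.2 hB)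
  have hsq : 2 * (√2 * nrad A) ^ 2 ≤ p ^ 2 + q ^ 2 := by
    have := (Real.le_sqrt (by positivity [nrad_nonneg A]) (by positivity)).1 hw
    nlinarith [Real.sq_sqrt (show (0 : ℝ) ≤ 2 by norm_num)]
  exact eq_of_two_mul_sq_le_sq_add_sq (norm_nonneg _) (norm_nonneg _) hp hq hsq

theorem stmt17 (A B : H →L[ℂ] H) (hA : A ≠ 0) (hB : B ≠ 0)
    (h : nrad (A * B + B * A) = 2 * Real.sqrt 2 * ‖B‖ * nrad A
      ∨ nrad (A * B - B * A) = 2 * Real.sqrt 2 * ‖B‖ * nrad A) :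
    ‖reP A + imP A‖ = ‖reP A - imP A‖ :=
  stmt17_general A B hB h
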